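/- Let E : ℕ → ℕ be a finitely supported function and let c* be a positive integer. Define the real numbers m = Σ_c E(c), B = Σ_c E(c)·min(1, c/c*), and D = Σ_{c ≤ c*} E(c)·(c* − c)/c*. Assume that Σ_{c < c*} E(c) > 0 and that there exists some c ≥ 1 with E(c) > 0 (so that B > 0). Then for all real numbers a, k with 0 < a < 1 and k > 1, the equation a·(x/m)^k = (x − B)/D has exactly one solution x in the open interval (0, m). -/

import Mathlib

/-!
Since `m - B = D`, the right-hand side is the line `(x - B)/(m - B)` through `(B, 0)` and `(m, 1)`,
while the left-hand side `a (x/m)^k` is strictly convex on `[0, ∞)`, positive at `B` and equal to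
`a < 1` at `m`. The intermediate value theorem gives a root in `(B, m)`. If `x < y < m` were two
roots, the strictly convex difference, `≤ 0` at `x` and at `m`, would be `< 0` at `y`.
-/

open Set

section Convexity

variable {E : Type*} [AddCommMonoid E] [Module ℝ E] {s : Set E} {f g : E → ℝ}

theorem StrictConvexOn.const_mul (hf : StrictConvexOn ℝ s f) {c : ℝ} (hc : 0 < c) :
    StrictConvexOn ℝ s fun x => c * f x := by
  refine ⟨hf.1, fun x hx y hy hxy a b ha hb hab => ?_⟩
  have h := hf.2 hx hy hxy ha hb hab
  simp only [smul_eq_mul] at h ⊢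
  nlinarith [mul_lt_mul_of_pos_left h hc]

theorem StrictConvexOn.lt_of_le_of_le_of_concaveOn (hf : StrictConvexOn ℝ s f)
    (hg : ConcaveOn ℝ s g) {x y z : E} (hx : x ∈ s) (hy : y ∈ s) (hxy : x ≠ y)
    (hz : z ∈ openSegment ℝ x y) (hfgx : f x ≤ g x) (hfgy : f y ≤ g y) : f z < g z := by
  have h := (hf.sub_concaveOn hg).lt_on_openSegment hx hy hxy hz
  have h0 := max_le (sub_nonpos.2 hfgx) (sub_nonpos.2 hfgy)
  simp only [Pi.sub_apply] at h
  linarith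

end Convexity

theorem concaveOn_sub_div {s : Set ℝ} (hs : Convex ℝ s) (b d : ℝ) :
    ConcaveOn ℝ s fun x => (x - b) / d := by
  refine ⟨hs, fun x _ y _ μ ν _ _ hμν => le_of_eq ?_⟩
  simp only [smul_eq_mul]
  linear_combination (-b / d) * hμν

theorem existsUnique_mem_Ioo_mul_div_rpow_eq {a k B m : ℝ} (hB : 0 < B) (hBm : B < m)
    (ha : 0 < a) (ha1 : a < 1) (hk : 1 < k) :
    ∃! x, x ∈ Ioo 0 m ∧ a * (x / m) ^ k = (x - B) / (m - B) := by
  have hm : 0 < m := hB.trans hBm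
  have hmB : 0 < m - B := sub_pos.2 hBm
  set φ : ℝ → ℝ := fun x => a * (x / m) ^ k - (x - B) / (m - B) with hφ
  have hφB : 0 < φ B := by
    simp only [hφ, sub_self, zero_div, sub_zero]
    have := Real.rpow_pos_of_pos (div_pos hB hm) k
    positivity
  have hφm : φ m < 0 := by
    simp [hφ, div_self hm.ne', div_self hmB.ne', ha1]
  have hφcont : Continuous φ := by
    have : Continuous fun x : ℝ => (x / m) ^ k :=
      (continuous_id.div_const m).rpow_const fun _ => Or.inr (by linarith)
    fun_prop
  have hconv : StrictConvexOn ℝ (Ici 0) fun x : ℝ => a * (x / m) ^ k :=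
    ((strictConvexOn_rpow hk).const_mul (by positivity : 0 < a / m ^ k)).congr fun x hx => by
      simp only [Real.div_rpow (mem_Ici.1 hx) hm.le]
      ring
  have lt_of_root_of_lt : ∀ x y, x ∈ Ioo 0 m → x < y → y < m →
      a * (x / m) ^ k = (x - B) / (m - B) → a * (y / m) ^ k < (y - B) / (m - B) := by
    intro x y hx hxy hym hxeq
    refine hconv.lt_of_le_of_le_of_concaveOn (concaveOn_sub_div (convex_Ici 0) B (m - B))
      (mem_Ici.2 hx.1.le) (mem_Ici.2 hm.le) (by linarith) ?_ hxeq.le ?_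
    · rw [openSegment_eq_Ioo (hxy.trans hym)]
      exact ⟨hxy, hym⟩
    · simp [div_self hm.ne', div_self hmB.ne', ha1.le]
  obtain ⟨x, hx, hφx⟩ := intermediate_value_Ioo' hBm.le hφcont.continuousOn ⟨hφm, hφB⟩
  have hxeq : a * (x / m) ^ k = (x - B) / (m - B) := sub_eq_zero.1 hφx
  refine ⟨x, ⟨⟨hB.trans hx.1, hx.2⟩, hxeq⟩, fun y ⟨hy, hyeq⟩ => ?_⟩
  rcases lt_trichotomy y x with hyx | rfl | hxy
  · exact absurd hxeq (lt_of_root_of_lt y x hy hyx hx.2 hyeq).ne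
  · rfl
  · exact absurd hyeq (lt_of_root_of_lt x y ⟨hB.trans hx.1, hx.2⟩ hxy hy.2 hxeq).ne

noncomputable def edgeCount (E : ℕ →₀ ℕ) : ℝ := ∑ c ∈ E.support, (E c : ℝ)

noncomputable def saturatedWeight (E : ℕ →₀ ℕ) (cstar : ℕ) : ℝ :=
  ∑ c ∈ E.support, (E c : ℝ) * min 1 ((c : ℝ) / (cstar : ℝ))

noncomputable def saturationDeficit (E : ℕ →₀ ℕ) (cstar : ℕ) : ℝ :=
  ∑ c ∈ Finset.range (cstar + 1), (E c : ℝ) * ((cstar : ℝ) - (c : ℝ)) / (cstar : ℝ)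

section EdgeProfile

variable {E : ℕ →₀ ℕ} {cstar : ℕ}

theorem saturatedWeight_pos (hcstar : 0 < cstar) (hne : ∃ c, 1 ≤ c ∧ 0 < E c) :
    0 < saturatedWeight E cstar := by
  obtain ⟨c₁, hc₁, hEc₁⟩ := hne
  refine Finset.sum_pos' (fun c _ => by positivity) ⟨c₁, Finsupp.mem_support_iff.2 hEc₁.ne', ?_⟩
  have : (0 : ℝ) < c₁ := by exact_mod_cast hc₁
  have : (0 : ℝ) < E c₁ := by exact_mod_cast hEc₁
  have : (0 : ℝ) < min 1 ((c₁ : ℝ) / cstar) := lt_min one_pos (by positivity)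
  positivity

theorem saturationDeficit_pos (hpos : 0 < ∑ c ∈ Finset.range cstar, E c) :
    0 < saturationDeficit E cstar := by
  obtain ⟨c₀, hc₀, hEc₀⟩ := Finset.sum_pos_iff.1 hpos
  have hc₀ : c₀ < cstar := Finset.mem_range.1 hc₀
  refine Finset.sum_pos' (fun c hc => ?_) ⟨c₀, Finset.mem_range.2 (by omega), ?_⟩
  · have : (c : ℝ) ≤ cstar := by exact_mod_cast Finset.mem_range_succ_iff.1 hc
    have : (0 : ℝ) ≤ cstar - c := sub_nonneg.2 this
    positivity
  · have : (0 : ℝ) < cstar - c₀ := sub_pos.2 (by exact_mod_cast hc₀)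
    have : (0 : ℝ) < E c₀ := by exact_mod_cast hEc₀
    have : 0 < cstar := by omega
    positivity

theorem edgeCount_sub_saturatedWeight (hcstar : 0 < cstar) :
    edgeCount E - saturatedWeight E cstar = saturationDeficit E cstar := by
  set φ : ℕ → ℝ := fun c => (E c : ℝ) * (1 - min 1 ((c : ℝ) / cstar))
  have hcs : (0 : ℝ) < cstar := by exact_mod_cast hcstar
  have h_support : edgeCount E - saturatedWeight E cstar = ∑ c ∈ E.support, φ c := by
    rw [edgeCount, saturatedWeight, ← Finset.sum_sub_distrib]
    exact Finset.sum_congr rfl fun c _ => by ring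
  have h_inter_support :
      ∑ c ∈ E.support ∩ Finset.range (cstar + 1), φ c = ∑ c ∈ E.support, φ c := by
    refine Finset.sum_subset Finset.inter_subset_left fun c hc hc' => ?_
    have : (cstar : ℝ) ≤ c := by
      have := Finset.mem_range.not.1 fun h => hc' (Finset.mem_inter.2 ⟨hc, h⟩)
      exact_mod_cast (by omega : cstar ≤ c)
    simp [φ, min_eq_left ((one_le_div hcs).2 this)]
  have h_inter_range : ∑ c ∈ E.support ∩ Finset.range (cstar + 1), φ c =
      ∑ c ∈ Finset.range (cstar + 1), φ c := by
    refine Finset.sum_subset Finset.inter_subset_right fun c hc hc' => ?_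
    have : E c = 0 := Finsupp.notMem_support_iff.1 fun h => hc' (Finset.mem_inter.2 ⟨h, hc⟩)
    simp [φ, this]
  rw [h_support, ← h_inter_support, h_inter_range, saturationDeficit]
  refine Finset.sum_congr rfl fun c hc => ?_
  have : (c : ℝ) ≤ cstar := by exact_mod_cast Finset.mem_range_succ_iff.1 hc
  simp only [φ, min_eq_right ((div_le_one hcs).2 this)]
  field_simp

end EdgeProfile

/-- For a finitely supported `E : ℕ → ℕ` and positive `c*`, with
`m = Σ_c E(c)`, `B = Σ_c E(c)·min(1, c/c*)`, `D = Σ_{c ≤ c*} E(c)·(c* − c)/c*`,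
if `Σ_{c < c*} E(c) > 0` and some `c ≥ 1` has `E(c) > 0`, then for all reals
`0 < a < 1` and `k > 1`, the equation `a·(x/m)^k = (x − B)/D` has exactly one
solution `x ∈ (0, m)`. -/
theorem stmt0 (E : ℕ →₀ ℕ) (cstar : ℕ) (hcstar : 0 < cstar)
    (hpos : 0 < ∑ c ∈ Finset.range cstar, E c)
    (hne : ∃ c, 1 ≤ c ∧ 0 < E c) :
    ∀ a k : ℝ, 0 < a → a < 1 → 1 < k →
      ∃! x : ℝ,
        x ∈ Set.Ioo (0 : ℝ) (∑ c ∈ E.support, (E c : ℝ)) ∧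
        a * (x / ∑ c ∈ E.support, (E c : ℝ)) ^ k =
          (x - ∑ c ∈ E.support, (E c : ℝ) * min 1 ((c : ℝ) / (cstar : ℝ))) /
          (∑ c ∈ Finset.range (cstar + 1),
            (E c : ℝ) * ((cstar : ℝ) - (c : ℝ)) / (cstar : ℝ)) := by
  intro a k ha ha1 hk
  have hD := edgeCount_sub_saturatedWeight (E := E) hcstar
  have hBm : saturatedWeight E cstar < edgeCount E :=
    sub_pos.1 (hD ▸ saturationDeficit_pos hpos)
  have h := existsUnique_mem_Ioo_mul_div_rpow_eq (saturatedWeight_pos hcstar hne) hBm ha ha1 hk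
  rw [hD] at h
  exact h
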